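/- arXiv:0912.2909 — 2 statements merged into one kernel-verified Lean document; each statement's English description precedes it below -/
import Mathlib

section
/- Set U = (1/√2)·[[i, 1], [1, i]], W_a = [[e^{iα}, i e^{−iα}], [−i e^{iα}, e^{−iα}]], W_b = [[−i e^{iβ}, e^{−iβ}], [e^{iβ}, i e^{−iβ}]], and B(x) = U·[[−t(x), −q(x)], [p(x), t(x)]]·U† (U† the conjugate transpose). Given real-valued continuously differentiable f, g on [a,b] and λ ∈ ℝ, define u = (i f + g)/√2 and v = (f + i g)/√2. Then (f,g) satisfies the Dirac-type system with parameter λ together with the separated boundary conditions if and only if (u,v) satisfies the first-order system (u,v)'(x) = (λ·diag(iρ(x), −iρ(x)) + B(x))·(u,v)(x) on [a,b] together with the coupled boundary condition W_a·(u(a), v(a))ᵀ + W_b·(u(b), v(b))ᵀ = 0. -/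
/-!
With `U = (1/√2) [[i, 1], [1, i]]` one has `(u, v) = U (f, g)`, and `U` is unitary. The Dirac system
reads `(f, g)' = (A + λρ J) (f, g)` with `A = [[-t, -q], [p, t]]` and `J = [[0, 1], [-1, 0]]`; since
`U J U† = diag(i, -i)`, conjugating by `U` turns it into `(u, v)' = (λ diag(iρ, -iρ) + B) (u, v)`.
On the boundary, `W_a U (f, g) = √2 (f cos α + g sin α) (i, 1)` and
`W_b U (f, g) = √2 (f cos β + g sin β) (1, i)`, and `(i, 1)`, `(1, i)` are linearly independent over `ℝ`.
-/

open Matrix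

def DiracBC (a b α β : ℝ) (f g : ℝ → ℝ) : Prop :=
  f a * Real.cos α + g a * Real.sin α = 0 ∧
  f b * Real.cos β + g b * Real.sin β = 0

open Complex

section MatrixDerivative

variable {𝕜 𝔸 n : Type*} [NontriviallyNormedField 𝕜] [NormedRing 𝔸] [NormedAlgebra 𝕜 𝔸]
  [Fintype n] {F : 𝕜 → n → 𝔸} {y : n → 𝔸} {S : Set 𝕜} {x : 𝕜}

theorem HasDerivWithinAt.matrix_mulVec (V : Matrix n n 𝔸) (h : HasDerivWithinAt F y S x) :
    HasDerivWithinAt (fun s => V *ᵥ F s) (V *ᵥ y) S x :=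
  hasDerivWithinAt_pi.2 fun i => by
    simpa only [mulVec, dotProduct] using
      HasDerivWithinAt.fun_sum fun j _ => (hasDerivWithinAt_pi.1 h j).const_mul (V i j)

theorem hasDerivWithinAt_mulVec_iff [DecidableEq n] {V V' : Matrix n n 𝔸} (hV : V' * V = 1) :
    HasDerivWithinAt (fun s => V *ᵥ F s) (V *ᵥ y) S x ↔ HasDerivWithinAt F y S x := by
  refine ⟨fun h => ?_, fun h => h.matrix_mulVec V⟩
  simpa only [mulVec_mulVec, hV, one_mulVec] using h.matrix_mulVec V'

end MatrixDerivative

theorem HasDerivWithinAt.hasDerivWithinAt_iff_eq {𝕜 E : Type*} [NontriviallyNormedField 𝕜]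
    [NormedAddCommGroup E] [NormedSpace 𝕜 E] {f : 𝕜 → E} {f' g' : E} {S : Set 𝕜} {x : 𝕜}
    (h : HasDerivWithinAt f f' S x) (hS : UniqueDiffWithinAt 𝕜 S x) :
    HasDerivWithinAt f g' S x ↔ g' = f' :=
  ⟨fun h' => hS.eq_deriv S h' h, fun e => e ▸ h⟩

noncomputable def diracU : Matrix (Fin 2) (Fin 2) ℂ := (1 / Real.sqrt 2 : ℝ) • !![I, 1; 1, I]

lemma ofReal_sqrt_two_sq : (Real.sqrt 2 : ℂ) ^ 2 = 2 := by
  exact_mod_cast Real.sq_sqrt zero_le_two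

lemma conjTranspose_diracU_mul_self : diracUᴴ * diracU = 1 := by
  ext i j
  fin_cases i <;> fin_cases j <;>
    simp [diracU, mul_apply, Fin.sum_univ_two, conjTranspose_apply, Complex.real_smul] <;>
    grind [I_sq, ofReal_sqrt_two_sq]

lemma diracU_mul_J_mul_conjTranspose :
    diracU * !![0, 1; -1, 0] * diracUᴴ = diagonal ![I, -I] := by
  ext i j
  fin_cases i <;> fin_cases j <;>
    simp [diracU, mul_apply, Fin.sum_univ_two, conjTranspose_apply, Complex.real_smul] <;>
    grind [I_sq, ofReal_sqrt_two_sq]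

lemma diracU_mulVec (z w : ℂ) :
    diracU *ᵥ ![z, w] = ![(I * z + w) / Real.sqrt 2, (z + I * w) / Real.sqrt 2] := by
  ext i
  fin_cases i <;> simp [diracU, mulVec, dotProduct, Fin.sum_univ_two, Complex.real_smul] <;> ring

lemma smul_diagonal_add_diracU_conj (lam ρ p q t : ℝ) :
    (lam : ℂ) • diagonal ![I * ρ, -(I * ρ)] + diracU * !![-(t : ℂ), -q; p, t] * diracUᴴ =
      diracU * !![-(t : ℂ), (lam * ρ : ℝ) - q; p - (lam * ρ : ℝ), t] * diracUᴴ := by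
  have hsplit : !![-(t : ℂ), (lam * ρ : ℝ) - q; p - (lam * ρ : ℝ), t] =
      !![-(t : ℂ), -q; p, t] + ((lam * ρ : ℝ) : ℂ) • !![0, 1; -1, 0] := by
    ext i j; fin_cases i <;> fin_cases j <;> simp <;> ring
  have hdiag : (lam : ℂ) • diagonal ![I * ρ, -(I * ρ)] = ((lam * ρ : ℝ) : ℂ) • diagonal ![I, -I] := by
    ext i j; fin_cases i <;> fin_cases j <;> simp <;> ring
  rw [hsplit, Matrix.mul_add, Matrix.add_mul, Matrix.mul_smul, Matrix.smul_mul,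
    diracU_mul_J_mul_conjTranspose, hdiag, add_comm]

lemma dirac_mulVec_eq_iff (p q t μ f g f' g' : ℝ) :
    !![-(t : ℂ), μ - q; p - μ, t] *ᵥ ![(f : ℂ), g] = ![(f' : ℂ), g'] ↔
      -g' + t * g + (p - μ) * f = 0 ∧ f' + t * f + (q - μ) * g = 0 := by
  rw [mulVec_fin_two, vecCons_inj, vecCons_inj]
  simp only [of_apply, cons_val_zero, cons_val_one, cons_val_fin_one, and_true]
  norm_cast
  constructor <;> rintro ⟨h₁, h₂⟩ <;> constructor <;> linarith

noncomputable def diracWa (α : ℝ) : Matrix (Fin 2) (Fin 2) ℂ :=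
  !![exp (I * α), I * exp (-(I * α)); -(I * exp (I * α)), exp (-(I * α))]

noncomputable def diracWb (β : ℝ) : Matrix (Fin 2) (Fin 2) ℂ :=
  !![-(I * exp (I * β)), exp (-(I * β)); exp (I * β), I * exp (-(I * β))]

lemma exp_I_mul_ofReal (θ : ℝ) : exp (I * θ) = Real.cos θ + Real.sin θ * I := by
  rw [mul_comm, exp_mul_I, ofReal_cos, ofReal_sin]

lemma exp_neg_I_mul_ofReal (θ : ℝ) : exp (-(I * θ)) = Real.cos θ - Real.sin θ * I := by
  rw [← mul_neg, ← ofReal_neg, exp_I_mul_ofReal, Real.cos_neg, Real.sin_neg, ofReal_neg, neg_mul,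
    sub_eq_add_neg]

lemma diracWa_mulVec_diracU_mulVec (α f g : ℝ) :
    diracWa α *ᵥ (diracU *ᵥ ![(f : ℂ), g]) =
      ((Real.sqrt 2 * (f * Real.cos α + g * Real.sin α) : ℝ) : ℂ) • ![I, 1] := by
  rw [diracU_mulVec]
  ext i
  fin_cases i <;>
    simp [diracWa, mulVec, dotProduct, exp_I_mul_ofReal, exp_neg_I_mul_ofReal] <;>
    grind [I_sq, ofReal_sqrt_two_sq]

lemma diracWb_mulVec_diracU_mulVec (β f g : ℝ) :
    diracWb β *ᵥ (diracU *ᵥ ![(f : ℂ), g]) =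
      ((Real.sqrt 2 * (f * Real.cos β + g * Real.sin β) : ℝ) : ℂ) • ![1, I] := by
  rw [diracU_mulVec]
  ext i
  fin_cases i <;>
    simp [diracWb, mulVec, dotProduct, exp_I_mul_ofReal, exp_neg_I_mul_ofReal] <;>
    grind [I_sq, ofReal_sqrt_two_sq]

lemma ofReal_smul_add_ofReal_smul_eq_zero_iff (r s : ℝ) :
    (r : ℂ) • ![I, 1] + (s : ℂ) • ![1, I] = 0 ↔ r = 0 ∧ s = 0 := by
  simp [← List.ofFn_inj, Complex.ext_iff, and_comm]

theorem dirac_system_unitary_transformation_general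
    (a b : ℝ) (hab : a < b)
    (p q t ρ : ℝ → ℝ)
    (α β : ℝ)
    (U Wa Wb : Matrix (Fin 2) (Fin 2) ℂ)
    (hU : U = (1 / Real.sqrt 2 : ℝ) • !![Complex.I, 1; 1, Complex.I])
    (hWa : Wa = !![Complex.exp (Complex.I * α), Complex.I * Complex.exp (-(Complex.I * α));
                   -(Complex.I * Complex.exp (Complex.I * α)), Complex.exp (-(Complex.I * α))])
    (hWb : Wb = !![-(Complex.I * Complex.exp (Complex.I * β)), Complex.exp (-(Complex.I * β));
                   Complex.exp (Complex.I * β), Complex.I * Complex.exp (-(Complex.I * β))])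
    (B : ℝ → Matrix (Fin 2) (Fin 2) ℂ)
    (hB : ∀ x, B x = U * !![-(t x : ℂ), -(q x : ℂ); (p x : ℂ), (t x : ℂ)] * U.conjTranspose)
    (lam : ℝ)
    (f g f' g' : ℝ → ℝ)
    (hf' : ∀ x ∈ Set.Icc a b, HasDerivWithinAt f (f' x) (Set.Icc a b) x)
    (hg' : ∀ x ∈ Set.Icc a b, HasDerivWithinAt g (g' x) (Set.Icc a b) x)
    (u v : ℝ → ℂ)
    (hu : ∀ x, u x = (Complex.I * f x + g x) / Real.sqrt 2)
    (hv : ∀ x, v x = (f x + Complex.I * g x) / Real.sqrt 2) :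
    ((∀ x ∈ Set.Icc a b, -g' x + t x * g x + (p x - lam * ρ x) * f x = 0) ∧
     (∀ x ∈ Set.Icc a b, f' x + t x * f x + (q x - lam * ρ x) * g x = 0) ∧
     DiracBC a b α β f g) ↔
    ((∀ x ∈ Set.Icc a b,
        HasDerivWithinAt (fun s : ℝ => ![u s, v s])
          (((lam : ℂ) • Matrix.diagonal
              ![Complex.I * (ρ x : ℂ), -(Complex.I * (ρ x : ℂ))] + B x).mulVec
            ![u x, v x])
          (Set.Icc a b) x) ∧
     Wa.mulVec ![u a, v a] + Wb.mulVec ![u b, v b] = 0) := by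
  obtain rfl : U = diracU := hU
  obtain rfl : Wa = diracWa α := hWa
  obtain rfl : Wb = diracWb β := hWb
  have huv : ∀ s, ![u s, v s] = diracU *ᵥ ![(f s : ℂ), g s] := fun s => by
    rw [diracU_mulVec, hu, hv]
  have hfg : ∀ x ∈ Set.Icc a b, HasDerivWithinAt (fun s => ![(f s : ℂ), g s]) ![(f' x : ℂ), g' x]
      (Set.Icc a b) x := fun x hx => by
    refine hasDerivWithinAt_pi.2 fun i => ?_
    fin_cases i
    exacts [(hf' x hx).ofReal_comp, (hg' x hx).ofReal_comp]
  have hode : ∀ x ∈ Set.Icc a b, HasDerivWithinAt (fun s : ℝ => ![u s, v s])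
        (((lam : ℂ) • diagonal ![I * (ρ x : ℂ), -(I * (ρ x : ℂ))] + B x) *ᵥ ![u x, v x])
        (Set.Icc a b) x ↔
      -g' x + t x * g x + (p x - lam * ρ x) * f x = 0 ∧
        f' x + t x * f x + (q x - lam * ρ x) * g x = 0 := fun x hx => by
    rw [hB, smul_diagonal_add_diracU_conj]
    simp only [huv]
    rw [mulVec_mulVec, Matrix.mul_assoc, Matrix.mul_assoc, conjTranspose_diracU_mul_self,
      Matrix.mul_one, ← mulVec_mulVec, hasDerivWithinAt_mulVec_iff conjTranspose_diracU_mul_self,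
      (hfg x hx).hasDerivWithinAt_iff_eq (uniqueDiffOn_Icc hab x hx), dirac_mulVec_eq_iff]
  have hbc : diracWa α *ᵥ ![u a, v a] + diracWb β *ᵥ ![u b, v b] = 0 ↔ DiracBC a b α β f g := by
    rw [huv, huv, diracWa_mulVec_diracU_mulVec, diracWb_mulVec_diracU_mulVec,
      ofReal_smul_add_ofReal_smul_eq_zero_iff, DiracBC]
    simp
  rw [hbc, ← and_assoc, ← forall₂_and]
  exact and_congr_left' (forall₂_congr fun x hx => (hode x hx).symm)

/-- With `U = (1/√2)[[i,1],[1,i]]`, `W_a = [[e^{iα}, i e^{-iα}],[-i e^{iα}, e^{-iα}]]`,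
`W_b = [[-i e^{iβ}, e^{-iβ}],[e^{iβ}, i e^{-iβ}]]`, `B = U [[-t,-q],[p,t]] U†`,
and `u = (i f + g)/√2`, `v = (f + i g)/√2`, the pair `(f,g)` satisfies the
Dirac-type system with parameter `lam` and the separated boundary conditions
iff `(u,v)` satisfies `(u,v)' = (lam diag(iρ, -iρ) + B)(u,v)` on `[a,b]` with
the coupled boundary condition `W_a (u(a),v(a))ᵀ + W_b (u(b),v(b))ᵀ = 0`. -/
theorem dirac_system_unitary_transformation
    (a b : ℝ) (hab : a < b)
    (p q t ρ : ℝ → ℝ)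
    (hp : ContDiffOn ℝ 1 p (Set.Icc a b)) (hq : ContDiffOn ℝ 1 q (Set.Icc a b))
    (ht : ContDiffOn ℝ 1 t (Set.Icc a b)) (hρ : ContDiffOn ℝ 1 ρ (Set.Icc a b))
    (hρpos : ∀ x ∈ Set.Icc a b, 0 < ρ x)
    (α β : ℝ) (hα : α ∈ Set.Ico 0 (2 * Real.pi)) (hβ : β ∈ Set.Ico 0 (2 * Real.pi))
    (U Wa Wb : Matrix (Fin 2) (Fin 2) ℂ)
    (hU : U = (1 / Real.sqrt 2 : ℝ) • !![Complex.I, 1; 1, Complex.I])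
    (hWa : Wa = !![Complex.exp (Complex.I * α), Complex.I * Complex.exp (-(Complex.I * α));
                   -(Complex.I * Complex.exp (Complex.I * α)), Complex.exp (-(Complex.I * α))])
    (hWb : Wb = !![-(Complex.I * Complex.exp (Complex.I * β)), Complex.exp (-(Complex.I * β));
                   Complex.exp (Complex.I * β), Complex.I * Complex.exp (-(Complex.I * β))])
    (B : ℝ → Matrix (Fin 2) (Fin 2) ℂ)
    (hB : ∀ x, B x = U * !![-(t x : ℂ), -(q x : ℂ); (p x : ℂ), (t x : ℂ)] * U.conjTranspose)
    (lam : ℝ)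
    (f g f' g' : ℝ → ℝ)
    (hf' : ∀ x ∈ Set.Icc a b, HasDerivWithinAt f (f' x) (Set.Icc a b) x)
    (hg' : ∀ x ∈ Set.Icc a b, HasDerivWithinAt g (g' x) (Set.Icc a b) x)
    (hf'c : ContinuousOn f' (Set.Icc a b)) (hg'c : ContinuousOn g' (Set.Icc a b))
    (u v : ℝ → ℂ)
    (hu : ∀ x, u x = (Complex.I * f x + g x) / Real.sqrt 2)
    (hv : ∀ x, v x = (f x + Complex.I * g x) / Real.sqrt 2) :
    ((∀ x ∈ Set.Icc a b, -g' x + t x * g x + (p x - lam * ρ x) * f x = 0) ∧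
     (∀ x ∈ Set.Icc a b, f' x + t x * f x + (q x - lam * ρ x) * g x = 0) ∧
     DiracBC a b α β f g) ↔
    ((∀ x ∈ Set.Icc a b,
        HasDerivWithinAt (fun s : ℝ => ![u s, v s])
          (((lam : ℂ) • Matrix.diagonal
              ![Complex.I * (ρ x : ℂ), -(Complex.I * (ρ x : ℂ))] + B x).mulVec
            ![u x, v x])
          (Set.Icc a b) x) ∧
     Wa.mulVec ![u a, v a] + Wb.mulVec ![u b, v b] = 0) :=
  dirac_system_unitary_transformation_general a b hab p q t ρ α β U Wa Wb hU hWa hWb B hB lam f g f'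
    g' hf' hg' u v hu hv
end

section
/- Expansion-coefficient identity of the relativistic R-matrix theory: under the stated hypotheses, including P(0) = Q(0) = P_i(0) = Q_i(0) = 0 and the artificial boundary condition Q_i(ϱ) = (ℏ/(2mc))·b·P_i(ϱ), one has (E_i − E)·∫₀^ϱ (P_i(r)P(r) + Q_i(r)Q(r)) dr = (ℏ²/2m)·P_i(ϱ)·[(2mc/ℏ)·Q(ϱ) − b·P(ϱ)]. -/
/-!
The cross product `W = cℏ (Pᵢ Q - P Qᵢ)` of two solutions of the radial Dirac system is a
Wronskian: along the equations the centrifugal terms `κ/r` and the potential `V` cancel, leaving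
`W' = (Eᵢ - E) (Pᵢ P + Qᵢ Q)`. Integrating over `[0, ϱ]`, `W(0) = 0` and the boundary condition
on `(Pᵢ, Qᵢ)` turn `W(ϱ)` into the right-hand side.
-/

open Set

theorem intervalIntegral.integral_eq_sub_of_hasDerivWithinAt_Ioc {f f' : ℝ → ℝ} {a b : ℝ}
    (hab : a ≤ b) (hf : ContinuousOn f (Icc a b))
    (hderiv : ∀ x ∈ Ioc a b, HasDerivWithinAt f (f' x) (Ioc a b) x)
    (hf' : ContinuousOn f' (Icc a b)) :
    ∫ x in a..b, f' x = f b - f a :=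
  integral_eq_sub_of_hasDerivAt_of_le hab hf
    (fun x hx => (hderiv x (Ioo_subset_Ioc_self hx)).hasDerivAt (Ioc_mem_nhds hx.1 hx.2))
    (hf'.intervalIntegrable_of_Icc hab)

theorem hasDerivWithinAt_radialDirac_wronskian {P Q P' Q' Pi Qi Pi' Qi' : ℝ → ℝ}
    {s : Set ℝ} {x : ℝ} (c ℏ m k v E Ei : ℝ)
    (hPd : HasDerivWithinAt P (P' x) s x) (hQd : HasDerivWithinAt Q (Q' x) s x)
    (hPid : HasDerivWithinAt Pi (Pi' x) s x) (hQid : HasDerivWithinAt Qi (Qi' x) s x)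
    (heqP : c * ℏ * (-Q' x + k * Q x) + (m * c ^ 2 + v - E) * P x = 0)
    (heqQ : c * ℏ * (P' x + k * P x) + (-(m * c ^ 2) + v - E) * Q x = 0)
    (heqPi : c * ℏ * (-Qi' x + k * Qi x) + (m * c ^ 2 + v - Ei) * Pi x = 0)
    (heqQi : c * ℏ * (Pi' x + k * Pi x) + (-(m * c ^ 2) + v - Ei) * Qi x = 0) :
    HasDerivWithinAt (fun r => c * ℏ * (Pi r * Q r - P r * Qi r))
      ((Ei - E) * (Pi x * P x + Qi x * Q x)) s x := by
  refine (((hPid.mul hQd).sub (hPd.mul hQid)).const_mul (c * ℏ)).congr_deriv ?_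
  linear_combination Q x * heqQi - Pi x * heqP - Qi x * heqQ + P x * heqPi

theorem relativistic_rmatrix_coefficient_identity_general
    (ϱ ℏ m c b E Ei : ℝ) (hϱ : 0 < ϱ) (hℏ : 0 < ℏ) (hm : 0 < m) (hc : 0 < c)
    (κ : ℤ)
    (V : ℝ → ℝ)
    (P Q P' Q' Pi Qi Pi' Qi' : ℝ → ℝ)
    -- (P,Q) is continuous on [0,ϱ], C¹ on (0,ϱ], and vanishes at the origin
    (hPc : ContinuousOn P (Set.Icc 0 ϱ)) (hQc : ContinuousOn Q (Set.Icc 0 ϱ))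
    (hPd : ∀ r ∈ Set.Ioc 0 ϱ, HasDerivWithinAt P (P' r) (Set.Ioc 0 ϱ) r)
    (hQd : ∀ r ∈ Set.Ioc 0 ϱ, HasDerivWithinAt Q (Q' r) (Set.Ioc 0 ϱ) r)
    (hP0 : P 0 = 0) (hQ0 : Q 0 = 0)
    -- (Pᵢ,Qᵢ) is continuous on [0,ϱ], C¹ on (0,ϱ], and vanishes at the origin
    (hPic : ContinuousOn Pi (Set.Icc 0 ϱ)) (hQic : ContinuousOn Qi (Set.Icc 0 ϱ))
    (hPid : ∀ r ∈ Set.Ioc 0 ϱ, HasDerivWithinAt Pi (Pi' r) (Set.Ioc 0 ϱ) r)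
    (hQid : ∀ r ∈ Set.Ioc 0 ϱ, HasDerivWithinAt Qi (Qi' r) (Set.Ioc 0 ϱ) r)
    (hPi0 : Pi 0 = 0) (hQi0 : Qi 0 = 0)
    -- the radial Dirac equations on (0,ϱ] for (P,Q) with energy E
    (heqP : ∀ r ∈ Set.Ioc 0 ϱ,
      c * ℏ * (-Q' r + (κ / r : ℝ) * Q r) + (m * c ^ 2 + V r - E) * P r = 0)
    (heqQ : ∀ r ∈ Set.Ioc 0 ϱ,
      c * ℏ * (P' r + (κ / r : ℝ) * P r) + (-(m * c ^ 2) + V r - E) * Q r = 0)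
    -- the radial Dirac equations on (0,ϱ] for (Pᵢ,Qᵢ) with energy Eᵢ
    (heqPi : ∀ r ∈ Set.Ioc 0 ϱ,
      c * ℏ * (-Qi' r + (κ / r : ℝ) * Qi r) + (m * c ^ 2 + V r - Ei) * Pi r = 0)
    (heqQi : ∀ r ∈ Set.Ioc 0 ϱ,
      c * ℏ * (Pi' r + (κ / r : ℝ) * Pi r) + (-(m * c ^ 2) + V r - Ei) * Qi r = 0)
    -- the artificial R-matrix boundary condition for (Pᵢ,Qᵢ) at r = ϱ
    (hbc : Qi ϱ = (ℏ / (2 * m * c)) * b * Pi ϱ) :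
    (Ei - E) * (∫ r in (0:ℝ)..ϱ, (Pi r * P r + Qi r * Q r))
      = (ℏ ^ 2 / (2 * m)) * Pi ϱ * ((2 * m * c / ℏ) * Q ϱ - b * P ϱ) := by
  have hftc := intervalIntegral.integral_eq_sub_of_hasDerivWithinAt_Ioc hϱ.le
    (f := fun r => c * ℏ * (Pi r * Q r - P r * Qi r))
    (continuousOn_const.mul ((hPic.mul hQc).sub (hPc.mul hQic)))
    (fun r hr => hasDerivWithinAt_radialDirac_wronskian c ℏ m _ _ E Ei
      (hPd r hr) (hQd r hr) (hPid r hr) (hQid r hr)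
      (heqP r hr) (heqQ r hr) (heqPi r hr) (heqQi r hr))
    (continuousOn_const.mul ((hPic.mul hPc).add (hQic.mul hQc)))
  rw [← intervalIntegral.integral_const_mul, hftc, hP0, hQ0, hPi0, hQi0, hbc]
  field_simp
  ring

/-- Expansion-coefficient identity of the relativistic R-matrix theory:
if `(P,Q)` and `(Pᵢ,Qᵢ)` solve the radial Dirac equations on `(0,ϱ]` with
energies `E` and `Eᵢ`, vanish at the origin, and `(Pᵢ,Qᵢ)` satisfies the
artificial boundary condition `Qᵢ(ϱ) = (ℏ/(2mc)) b Pᵢ(ϱ)`, then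
`(Eᵢ - E) ∫₀^ϱ (Pᵢ P + Qᵢ Q) = (ℏ²/2m) Pᵢ(ϱ) ((2mc/ℏ) Q(ϱ) - b P(ϱ))`. -/
theorem relativistic_rmatrix_coefficient_identity
    (ϱ ℏ m c b E Ei : ℝ) (hϱ : 0 < ϱ) (hℏ : 0 < ℏ) (hm : 0 < m) (hc : 0 < c)
    (hE : E ≠ Ei)
    (κ : ℤ) (hκ : κ ≠ 0)
    (V : ℝ → ℝ) (hV : ContinuousOn V (Set.Ioc 0 ϱ))
    (P Q P' Q' Pi Qi Pi' Qi' : ℝ → ℝ)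
    -- (P,Q) is continuous on [0,ϱ], C¹ on (0,ϱ], and vanishes at the origin
    (hPc : ContinuousOn P (Set.Icc 0 ϱ)) (hQc : ContinuousOn Q (Set.Icc 0 ϱ))
    (hPd : ∀ r ∈ Set.Ioc 0 ϱ, HasDerivWithinAt P (P' r) (Set.Ioc 0 ϱ) r)
    (hQd : ∀ r ∈ Set.Ioc 0 ϱ, HasDerivWithinAt Q (Q' r) (Set.Ioc 0 ϱ) r)
    (hP'c : ContinuousOn P' (Set.Ioc 0 ϱ)) (hQ'c : ContinuousOn Q' (Set.Ioc 0 ϱ))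
    (hP0 : P 0 = 0) (hQ0 : Q 0 = 0)
    -- (Pᵢ,Qᵢ) is continuous on [0,ϱ], C¹ on (0,ϱ], and vanishes at the origin
    (hPic : ContinuousOn Pi (Set.Icc 0 ϱ)) (hQic : ContinuousOn Qi (Set.Icc 0 ϱ))
    (hPid : ∀ r ∈ Set.Ioc 0 ϱ, HasDerivWithinAt Pi (Pi' r) (Set.Ioc 0 ϱ) r)
    (hQid : ∀ r ∈ Set.Ioc 0 ϱ, HasDerivWithinAt Qi (Qi' r) (Set.Ioc 0 ϱ) r)
    (hPi'c : ContinuousOn Pi' (Set.Ioc 0 ϱ)) (hQi'c : ContinuousOn Qi' (Set.Ioc 0 ϱ))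
    (hPi0 : Pi 0 = 0) (hQi0 : Qi 0 = 0)
    -- the radial Dirac equations on (0,ϱ] for (P,Q) with energy E
    (heqP : ∀ r ∈ Set.Ioc 0 ϱ,
      c * ℏ * (-Q' r + (κ / r : ℝ) * Q r) + (m * c ^ 2 + V r - E) * P r = 0)
    (heqQ : ∀ r ∈ Set.Ioc 0 ϱ,
      c * ℏ * (P' r + (κ / r : ℝ) * P r) + (-(m * c ^ 2) + V r - E) * Q r = 0)
    -- the radial Dirac equations on (0,ϱ] for (Pᵢ,Qᵢ) with energy Eᵢ
    (heqPi : ∀ r ∈ Set.Ioc 0 ϱ,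
      c * ℏ * (-Qi' r + (κ / r : ℝ) * Qi r) + (m * c ^ 2 + V r - Ei) * Pi r = 0)
    (heqQi : ∀ r ∈ Set.Ioc 0 ϱ,
      c * ℏ * (Pi' r + (κ / r : ℝ) * Pi r) + (-(m * c ^ 2) + V r - Ei) * Qi r = 0)
    -- the artificial R-matrix boundary condition for (Pᵢ,Qᵢ) at r = ϱ
    (hbc : Qi ϱ = (ℏ / (2 * m * c)) * b * Pi ϱ) :
    (Ei - E) * (∫ r in (0:ℝ)..ϱ, (Pi r * P r + Qi r * Q r))
      = (ℏ ^ 2 / (2 * m)) * Pi ϱ * ((2 * m * c / ℏ) * Q ϱ - b * P ϱ) :=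
  relativistic_rmatrix_coefficient_identity_general ϱ ℏ m c b E Ei hϱ hℏ hm hc κ V P Q P' Q' Pi Qi
    Pi' Qi' hPc hQc hPd hQd hP0 hQ0 hPic hQic hPid hQid hPi0 hQi0 heqP heqQ heqPi heqQi hbc
end
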